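/- Let 0 < w1 ≤ w2 be integers. The number of affine equivalence classes of four-point multisets in ℤ² with multi-width (w1, w2) is at most (w1²/4 + w1 + c)·(6·w2² + 1), where c = 1 if w1 is even and c = 3/4 if w1 is odd. -/

import Mathlib

open scoped Pointwise

noncomputable section

/-- Embed an integer lattice point into real space. -/
def intEmbed {d : ℕ} (v : Fin d → ℤ) : Fin d → ℝ := fun i => (v i : ℝ)

/-- Pairing of an integer dual vector with a real point. -/
def dualPair {d : ℕ} (u : Fin d → ℤ) (x : Fin d → ℝ) : ℝ := ∑ i, (u i : ℝ) * x i

/-- The width of a set `P ⊆ ℝ^d` with respect to an integer dual vector `u`: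
`max_{x ∈ P} u·x − min_{x ∈ P} u·x`. -/
def widthIn {d : ℕ} (u : Fin d → ℤ) (P : Set (Fin d → ℝ)) : ℝ :=
  sSup (dualPair u '' P) - sInf (dualPair u '' P)

/-- `w` is a tuple of widths of `P` realized by linearly independent dual vectors. -/
def IsWidthTuple {d : ℕ} (P : Set (Fin d → ℝ)) (w : Fin d → ℝ) : Prop :=
  ∃ u : Fin d → (Fin d → ℤ), LinearIndependent ℤ u ∧ ∀ i, widthIn (u i) P = w i

/-- `w` is the multi-width of `P`: the lexicographically minimal width tuple over
linearly independent tuples of dual vectors. -/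
def IsMultiWidth {d : ℕ} (P : Set (Fin d → ℝ)) (w : Fin d → ℝ) : Prop :=
  IsWidthTuple P w ∧ ∀ w' : Fin d → ℝ, IsWidthTuple P w' → toLex w ≤ toLex w'

/-- The affine map `x ↦ A x + b` on real points, with integral `A` and `b`. -/
def unimodMap {d : ℕ} (A : Matrix (Fin d) (Fin d) ℤ) (b : Fin d → ℤ) (x : Fin d → ℝ) :
    Fin d → ℝ :=
  fun i => (∑ j, (A i j : ℝ) * x j) + (b i : ℝ)

/-- Affine unimodular equivalence of subsets of `ℝ^d`: `Q = A·P + b` with `A ∈ GL_d(ℤ)`,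
`b ∈ ℤ^d`. -/
def AffEquiv {d : ℕ} (P Q : Set (Fin d → ℝ)) : Prop :=
  ∃ A : Matrix (Fin d) (Fin d) ℤ, IsUnit A.det ∧ ∃ b : Fin d → ℤ, Q = unimodMap A b '' P

/-- A lattice polytope: the convex hull of finitely many lattice points. -/
def IsLatticePolytope {d : ℕ} (P : Set (Fin d → ℝ)) : Prop :=
  ∃ V : Finset (Fin d → ℤ), V.Nonempty ∧ P = convexHull ℝ (intEmbed '' (V : Set (Fin d → ℤ)))

/-- A lattice tetrahedron: the convex hull of 4 affinely independent lattice points in `ℝ³`. -/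
def IsLatticeTetrahedron (P : Set (Fin 3 → ℝ)) : Prop :=
  ∃ v : Fin 4 → (Fin 3 → ℤ), AffineIndependent ℝ (fun i => intEmbed (v i)) ∧
    P = convexHull ℝ (Set.range fun i => intEmbed (v i))

/-- The type of affine equivalence classes of lattice tetrahedra with multi-width `w`. -/
def TetClasses (w : Fin 3 → ℝ) : Type :=
  Quot fun P Q : {P : Set (Fin 3 → ℝ) // IsLatticeTetrahedron P ∧ IsMultiWidth P w} =>
    AffEquiv P.1 Q.1

/-- The real points of a multiset of lattice points. -/
def msetPts {d : ℕ} (S : Multiset (Fin d → ℤ)) : Set (Fin d → ℝ) :=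
  intEmbed '' {v | v ∈ S}

/-- The convex hull of a multiset of lattice points. -/
def msetHull {d : ℕ} (S : Multiset (Fin d → ℤ)) : Set (Fin d → ℝ) :=
  convexHull ℝ (msetPts S)

/-- Affine unimodular equivalence of multisets of lattice points. -/
def MsetEquiv {d : ℕ} (S T : Multiset (Fin d → ℤ)) : Prop :=
  ∃ A : Matrix (Fin d) (Fin d) ℤ, IsUnit A.det ∧ ∃ b : Fin d → ℤ,
    S.map (fun v => A.mulVec v + b) = T

/-- Affine unimodular equivalence of multisets of integers (`d = 1`). -/
def MsetEquivZ (S T : Multiset ℤ) : Prop :=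
  ∃ a : ℤ, IsUnit a ∧ ∃ b : ℤ, S.map (fun x => a * x + b) = T

/-- The width of a multiset of integers (the width of its convex hull). -/
def widthZ (S : Multiset ℤ) : ℝ :=
  sSup ((fun n : ℤ => (n : ℝ)) '' {n | n ∈ S}) - sInf ((fun n : ℤ => (n : ℝ)) '' {n | n ∈ S})

/-- `S` has a dual vector `u` of width `w1` whose image multiset `u·S` is affine
equivalent in `ℤ` to the multiset `L`. -/
def HasLineType (w1 : ℤ) (L : Multiset ℤ) (S : Multiset (Fin 2 → ℤ)) : Prop :=
  ∃ u : Fin 2 → ℤ, widthIn u (msetHull S) = (w1 : ℝ) ∧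
    MsetEquivZ (S.map fun v => ∑ i, u i * v i) L

/-!
A unimodular change of coordinates turns the two directions realizing the multi-width
`(w₁, w₂)` into the coordinate functionals: the direction of width `w₁` is primitive by
minimality, so it is the bottom row of a matrix in `SL(2, ℤ)`, and rounding the coordinates of
the direction of width `w₂` in that basis yields a complementary direction of width at most,
hence exactly, `w₂`. After a translation the four points lie in `[0, w₁] × [0, w₂]` and touch all
four sides; sorted by abscissa they are `(0, y₀), (a, y₁), (b, y₂), (w₁, y₃)`. The reflections
`x ↦ w₁ - x` and `y ↦ w₂ - y` let us assume `a + b ≤ w₁` and that `y` is lexicographically at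
most `w₂ - y`. There are `w₁²/4 + w₁ + c` such pairs `(a, b)`, and the reflection `y ↦ w₂ - y`
pairs up the `12 w₂² + 2` height vectors with values in `[0, w₂]` attaining `0` and `w₂`,
without fixed points.
-/

open Matrix Finset

section LatticeWidth

variable {d : ℕ} (u : Fin d → ℤ) (S : Multiset (Fin d → ℤ))

def minPairing : ℤ := sInf ((u ⬝ᵥ ·) '' {x | x ∈ S})

def maxPairing : ℤ := sSup ((u ⬝ᵥ ·) '' {x | x ∈ S})

def latticeWidth : ℤ := maxPairing u S - minPairing u S

variable {u S}

lemma finite_image_dotProduct : ((u ⬝ᵥ ·) '' {x | x ∈ S}).Finite :=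
  S.finite_toSet.image _

lemma nonempty_image_dotProduct (hS : S ≠ 0) : ((u ⬝ᵥ ·) '' {x | x ∈ S}).Nonempty :=
  Set.Nonempty.image _ (Multiset.exists_mem_of_ne_zero hS)

lemma minPairing_le {x : Fin d → ℤ} (hx : x ∈ S) : minPairing u S ≤ u ⬝ᵥ x :=
  csInf_le finite_image_dotProduct.bddBelow ⟨x, hx, rfl⟩

lemma le_maxPairing {x : Fin d → ℤ} (hx : x ∈ S) : u ⬝ᵥ x ≤ maxPairing u S :=
  le_csSup finite_image_dotProduct.bddAbove ⟨x, hx, rfl⟩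

lemma exists_eq_minPairing (hS : S ≠ 0) : ∃ x ∈ S, u ⬝ᵥ x = minPairing u S :=
  (nonempty_image_dotProduct hS).csInf_mem finite_image_dotProduct

lemma exists_eq_maxPairing (hS : S ≠ 0) : ∃ x ∈ S, u ⬝ᵥ x = maxPairing u S :=
  (nonempty_image_dotProduct hS).csSup_mem finite_image_dotProduct

lemma sub_le_latticeWidth {x x' : Fin d → ℤ} (hx : x ∈ S) (hx' : x' ∈ S) :
    u ⬝ᵥ x - u ⬝ᵥ x' ≤ latticeWidth u S :=
  sub_le_sub (le_maxPairing hx) (minPairing_le hx')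

lemma abs_sub_le_latticeWidth {x x' : Fin d → ℤ} (hx : x ∈ S) (hx' : x' ∈ S) :
    |u ⬝ᵥ x - u ⬝ᵥ x'| ≤ latticeWidth u S :=
  abs_sub_le_iff.mpr ⟨sub_le_latticeWidth hx hx', sub_le_latticeWidth hx' hx⟩

lemma latticeWidth_le (hS : S ≠ 0) {c : ℤ} (h : ∀ x ∈ S, ∀ x' ∈ S, u ⬝ᵥ x - u ⬝ᵥ x' ≤ c) :
    latticeWidth u S ≤ c := by
  obtain ⟨x, hx, hmax⟩ := exists_eq_maxPairing (u := u) hS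
  obtain ⟨x', hx', hmin⟩ := exists_eq_minPairing (u := u) hS
  rw [latticeWidth, ← hmax, ← hmin]
  exact h x hx x' hx'

lemma latticeWidth_smul (hS : S ≠ 0) {c : ℤ} (hc : 0 ≤ c) :
    latticeWidth (c • u) S = c * latticeWidth u S := by
  refine le_antisymm (latticeWidth_le hS fun x hx x' hx' => ?_) ?_
  · rw [smul_dotProduct, smul_dotProduct, smul_eq_mul, smul_eq_mul, ← mul_sub]
    exact mul_le_mul_of_nonneg_left (sub_le_latticeWidth hx hx') hc
  · obtain ⟨x, hx, hmax⟩ := exists_eq_maxPairing (u := u) hS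
    obtain ⟨x', hx', hmin⟩ := exists_eq_minPairing (u := u) hS
    have := sub_le_latticeWidth (u := c • u) hx hx'
    rwa [smul_dotProduct, smul_dotProduct, smul_eq_mul, smul_eq_mul, ← mul_sub, hmax, hmin] at this

lemma dualPair_intEmbed (x : Fin d → ℤ) : dualPair u (intEmbed x) = ((u ⬝ᵥ x : ℤ) : ℝ) := by
  simp [dualPair, intEmbed, dotProduct]

lemma isLinearMap_dualPair : IsLinearMap ℝ (dualPair u) :=
  ⟨fun x y => by simp [dualPair, mul_add, sum_add_distrib],
   fun c x => by simp [dualPair, mul_sum, mul_left_comm]⟩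

lemma dualPair_mem_Icc {y : Fin d → ℝ} (hy : y ∈ msetHull S) :
    dualPair u y ∈ Set.Icc (minPairing u S : ℝ) (maxPairing u S) := by
  refine convexHull_min ?_ ((convex_Icc _ _).is_linear_preimage isLinearMap_dualPair) hy
  rintro _ ⟨x, hx, rfl⟩
  rw [Set.mem_preimage, dualPair_intEmbed]
  exact ⟨by exact_mod_cast minPairing_le hx, by exact_mod_cast le_maxPairing hx⟩

lemma widthIn_msetHull (hS : S ≠ 0) : widthIn u (msetHull S) = latticeWidth u S := by
  have hpt {x} (hx : x ∈ S) : intEmbed x ∈ msetHull S := subset_convexHull ℝ _ ⟨x, hx, rfl⟩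
  obtain ⟨x, hx, hmax⟩ := exists_eq_maxPairing (u := u) hS
  obtain ⟨x', hx', hmin⟩ := exists_eq_minPairing (u := u) hS
  have hsup : IsGreatest (dualPair u '' msetHull S) (maxPairing u S) :=
    ⟨⟨_, hpt hx, by rw [dualPair_intEmbed, hmax]⟩, by
      rintro _ ⟨y, hy, rfl⟩; exact (dualPair_mem_Icc hy).2⟩
  have hinf : IsLeast (dualPair u '' msetHull S) (minPairing u S) :=
    ⟨⟨_, hpt hx', by rw [dualPair_intEmbed, hmin]⟩, by
      rintro _ ⟨y, hy, rfl⟩; exact (dualPair_mem_Icc hy).1⟩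
  rw [widthIn, hsup.csSup_eq, hinf.csInf_eq, latticeWidth]
  push_cast; rfl

end LatticeWidth

section MultiWidth

variable {S : Multiset (Fin 2 → ℤ)} {w1 w2 : ℤ}

lemma IsMultiWidth.exists_latticeWidth_eq (h : IsMultiWidth (msetHull S) ![(w1 : ℝ), (w2 : ℝ)])
    (hS : S ≠ 0) : ∃ u v : Fin 2 → ℤ, LinearIndependent ℤ ![u, v] ∧
      latticeWidth u S = w1 ∧ latticeWidth v S = w2 := by
  obtain ⟨U, hU, hw⟩ := h.1
  refine ⟨U 0, U 1, by convert hU; ext i; fin_cases i <;> rfl, ?_, ?_⟩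
  · simpa using (widthIn_msetHull hS).symm.trans (hw 0)
  · simpa using (widthIn_msetHull hS).symm.trans (hw 1)

lemma IsMultiWidth.toLex_le (h : IsMultiWidth (msetHull S) ![(w1 : ℝ), (w2 : ℝ)]) (hS : S ≠ 0)
    {u v : Fin 2 → ℤ} (huv : LinearIndependent ℤ ![u, v]) :
    toLex ![(w1 : ℝ), (w2 : ℝ)] ≤ toLex ![(latticeWidth u S : ℝ), (latticeWidth v S : ℝ)] :=
  h.2 _ ⟨![u, v], huv, fun i => by fin_cases i <;> simp [widthIn_msetHull hS]⟩

lemma IsMultiWidth.le_latticeWidth (h : IsMultiWidth (msetHull S) ![(w1 : ℝ), (w2 : ℝ)])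
    (hS : S ≠ 0) {u v : Fin 2 → ℤ} (huv : LinearIndependent ℤ ![u, v]) :
    w1 ≤ latticeWidth u S := by
  simpa using Pi.apply_le_of_toLex (h.toLex_le hS huv) (i := 0) fun j hj => absurd hj j.not_lt_zero

lemma IsMultiWidth.le_latticeWidth_of_eq (h : IsMultiWidth (msetHull S) ![(w1 : ℝ), (w2 : ℝ)])
    (hS : S ≠ 0) {u v : Fin 2 → ℤ} (huv : LinearIndependent ℤ ![u, v])
    (hu : latticeWidth u S = w1) : w2 ≤ latticeWidth v S := by
  simpa using Pi.apply_le_of_toLex (h.toLex_le hS huv) (i := 1) fun j hj => by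
    fin_cases j
    · simp [hu]
    · exact absurd hj (lt_irrefl _)

/-- Dividing `u` by the gcd of its coordinates would give an independent direction of smaller
width. -/
lemma IsMultiWidth.isCoprime (h : IsMultiWidth (msetHull S) ![(w1 : ℝ), (w2 : ℝ)]) (hS : S ≠ 0)
    (h0 : 0 < w1) {u v : Fin 2 → ℤ} (huv : LinearIndependent ℤ ![u, v])
    (hu : latticeWidth u S = w1) : IsCoprime (u 0) (u 1) := by
  set g : ℤ := (Int.gcd (u 0) (u 1) : ℤ)
  have hg : 0 < g := by
    have hu0 : u ≠ 0 := by simpa using huv.ne_zero 0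
    refine Int.natCast_pos.mpr (Int.gcd_pos_iff.mpr ?_)
    by_contra! h00
    exact hu0 (by ext i; fin_cases i <;> simp [h00])
  set u' : Fin 2 → ℤ := fun i => u i / g
  have hgu' : g • u' = u := by
    ext i; fin_cases i
    · exact Int.mul_ediv_cancel' (Int.gcd_dvd_left _ _)
    · exact Int.mul_ediv_cancel' (Int.gcd_dvd_right _ _)
  have hu'v : LinearIndependent ℤ ![u', v] := by
    refine LinearIndependent.pair_iff.mpr fun s t hst => ?_
    have := LinearIndependent.pair_iff.mp huv s (g * t) (by
      rw [← hgu', smul_comm, mul_smul, ← smul_add, hst, smul_zero])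
    exact ⟨this.1, (mul_eq_zero.mp this.2).resolve_left hg.ne'⟩
  have hw : g * latticeWidth u' S = w1 := by rw [← latticeWidth_smul hS hg.le, hgu', hu]
  have hle := h.le_latticeWidth hS hu'v
  have hg1 : g = 1 := by nlinarith
  exact Int.isCoprime_iff_gcd_eq_one.mpr (by omega)

end MultiWidth

/-- Rounding `p / q` to the nearest integer `r`: since `q (r X + Y) = (p X + q Y) - (p - r q) X`
with `2 |p - r q| ≤ |q|`, the bound survives when passing from `(p, q)` to `(r, 1)`. -/
lemma exists_abs_add_le (p : ℤ) {q w1 w2 : ℤ} (hq : q ≠ 0) (h12 : w1 ≤ w2) :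
    ∃ r : ℤ, ∀ X Y : ℤ, |X| ≤ w1 → |p * X + q * Y| ≤ w2 → |r * X + Y| ≤ w2 := by
  set r := round ((p : ℚ) / q)
  set e := p - r * q
  have he : 2 * |e| ≤ |q| := by
    have hq' : (q : ℚ) ≠ 0 := by exact_mod_cast hq
    have : |(e : ℚ)| = |(q : ℚ)| * |(p : ℚ) / q - r| := by
      rw [← abs_mul, mul_sub, mul_div_cancel₀ _ hq']; push_cast [e]; ring_nf
    have := abs_sub_round ((p : ℚ) / q)
    have : 2 * |(e : ℚ)| ≤ |(q : ℚ)| := by nlinarith [abs_nonneg (q : ℚ)]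
    exact_mod_cast this
  refine ⟨r, fun X Y hX hY => ?_⟩
  have hqZ : |q| * |r * X + Y| ≤ w2 + |e| * w1 := by
    rw [← abs_mul, show q * (r * X + Y) = (p * X + q * Y) - e * X by ring]
    calc |p * X + q * Y - e * X| ≤ |p * X + q * Y| + |e * X| := abs_sub _ _
      _ ≤ w2 + |e| * w1 := by
        rw [abs_mul]; exact add_le_add hY (mul_le_mul_of_nonneg_left hX (abs_nonneg e))
  have hq1 : 1 ≤ |q| := Int.one_le_abs hq
  have hw1 : 0 ≤ w1 := (abs_nonneg X).trans hX
  rcases eq_or_ne e 0 with he0 | he0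
  · rw [he0, abs_zero, zero_mul, add_zero] at hqZ
    exact (le_mul_of_one_le_left (abs_nonneg _) hq1).trans hqZ
  · have he1 : 1 ≤ |e| := Int.one_le_abs he0
    have : 2 * |q| * |r * X + Y| ≤ 2 * |q| * w2 := by
      nlinarith [mul_le_mul_of_nonneg_left h12 (abs_nonneg e)]
    exact le_of_mul_le_mul_left this (by positivity)

lemma latticeWidth_smul_add_le {d : ℕ} {S : Multiset (Fin d → ℤ)} (hS : S ≠ 0)
    {u a v : Fin d → ℤ} {p q r w1 w2 : ℤ} (hv : v = p • u + q • a) (hu : latticeWidth u S ≤ w1)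
    (hvw : latticeWidth v S ≤ w2)
    (hr : ∀ X Y : ℤ, |X| ≤ w1 → |p * X + q * Y| ≤ w2 → |r * X + Y| ≤ w2) :
    latticeWidth (r • u + a) S ≤ w2 := by
  refine latticeWidth_le hS fun x hx x' hx' => le_of_abs_le ?_
  have hlin (s t : ℤ) : (s • u + t • a) ⬝ᵥ x - (s • u + t • a) ⬝ᵥ x' =
      s * (u ⬝ᵥ x - u ⬝ᵥ x') + t * (a ⬝ᵥ x - a ⬝ᵥ x') := by
    simp only [add_dotProduct, smul_dotProduct, smul_eq_mul]; ring
  have hY := (abs_sub_le_latticeWidth hx hx').trans hvw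
  rw [hv, hlin] at hY
  have := hr _ _ ((abs_sub_le_latticeWidth hx hx').trans hu) hY
  rwa [← one_mul (a ⬝ᵥ x - a ⬝ᵥ x'), ← hlin, one_smul] at this

theorem IsMultiWidth.exists_isUnit_det_latticeWidth_eq {S : Multiset (Fin 2 → ℤ)} {w1 w2 : ℤ}
    (h : IsMultiWidth (msetHull S) ![(w1 : ℝ), (w2 : ℝ)]) (hS : S ≠ 0) (h0 : 0 < w1)
    (h12 : w1 ≤ w2) : ∃ N : Matrix (Fin 2) (Fin 2) ℤ, IsUnit N.det ∧
      latticeWidth (N 0) S = w1 ∧ latticeWidth (N 1) S = w2 := by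
  obtain ⟨u, v, huv, hu, hv⟩ := h.exists_latticeWidth_eq hS
  obtain ⟨g, -, hgu⟩ := ModularGroup.bottom_row_surj (R := ℤ) (h.isCoprime hS h0 huv hu)
  set a := (g : Matrix (Fin 2) (Fin 2) ℤ) 0
  have hdet : a 0 * u 1 - a 1 * u 0 = 1 := by
    rw [← hgu, ← det_fin_two]; exact g.det_coe
  have hv_eq : v = (a 0 * v 1 - a 1 * v 0) • u + (v 0 * u 1 - v 1 * u 0) • a := by
    ext i; fin_cases i <;>
      simp only [Fin.zero_eta, Fin.mk_one, Pi.add_apply, Pi.smul_apply, smul_eq_mul] <;>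
      linear_combination (-v _) * hdet
  set p := a 0 * v 1 - a 1 * v 0
  set q := v 0 * u 1 - v 1 * u 0
  have hq : q ≠ 0 := by
    intro hq
    have := LinearIndependent.pair_iff.mp huv p (-1) (by rw [hv_eq, hq]; simp)
    exact absurd this.2 (by norm_num)
  obtain ⟨r, hr⟩ := exists_abs_add_le p hq h12
  set b := r • u + a
  have hb : latticeWidth b S ≤ w2 := latticeWidth_smul_add_le hS hv_eq hu.le hv.le hr
  have hN : IsUnit (Matrix.of ![u, b]).det := by
    rw [det_fin_two]
    exact Int.isUnit_iff.mpr (Or.inr (by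
      simp only [of_apply, cons_val_zero, cons_val_one, b, Pi.add_apply, Pi.smul_apply, smul_eq_mul]
      linear_combination -hdet))
  have hub : LinearIndependent ℤ ![u, b] :=
    linearIndependent_rows_of_isUnit ((isUnit_iff_isUnit_det _).mpr hN)
  exact ⟨_, hN, hu, le_antisymm hb (h.le_latticeWidth_of_eq hS hub hu)⟩

section MsetEquiv

variable {d : ℕ} {S T U : Multiset (Fin d → ℤ)}

lemma MsetEquiv.refl (S : Multiset (Fin d → ℤ)) : MsetEquiv S S :=
  ⟨1, by simp, 0, by simp⟩

lemma MsetEquiv.symm (h : MsetEquiv S T) : MsetEquiv T S := by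
  obtain ⟨A, hA, b, rfl⟩ := h
  refine ⟨A⁻¹, A.isUnit_nonsing_inv_det hA, -(A⁻¹ *ᵥ b), ?_⟩
  rw [Multiset.map_map]
  conv_rhs => rw [← Multiset.map_id S]
  refine Multiset.map_congr rfl fun x _ => ?_
  simp [mulVec_add, nonsing_inv_mul _ hA]

lemma MsetEquiv.trans (h : MsetEquiv S T) (h' : MsetEquiv T U) : MsetEquiv S U := by
  obtain ⟨A, hA, b, rfl⟩ := h
  obtain ⟨C, hC, c, rfl⟩ := h'
  refine ⟨C * A, by rw [det_mul]; exact hC.mul hA, C *ᵥ b + c, ?_⟩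
  rw [Multiset.map_map]
  refine Multiset.map_congr rfl fun x _ => ?_
  simp [mulVec_add, add_assoc]

lemma MsetEquiv.card_eq (h : MsetEquiv S T) : Multiset.card T = Multiset.card S := by
  obtain ⟨A, -, b, rfl⟩ := h
  exact Multiset.card_map _ _

end MsetEquiv

def HasBoundingBox {d : ℕ} (w : Fin d → ℤ) (T : Multiset (Fin d → ℤ)) : Prop :=
  ∀ i, (∀ y ∈ T, 0 ≤ y i ∧ y i ≤ w i) ∧ (∃ y ∈ T, y i = 0) ∧ ∃ y ∈ T, y i = w i

lemma exists_msetEquiv_hasBoundingBox {d : ℕ} {S : Multiset (Fin d → ℤ)} (hS : S ≠ 0)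
    {N : Matrix (Fin d) (Fin d) ℤ} (hN : IsUnit N.det) :
    ∃ T, MsetEquiv S T ∧ HasBoundingBox (fun i => latticeWidth (N i) S) T := by
  refine ⟨_, ⟨N, hN, fun i => -minPairing (N i) S, rfl⟩, fun i => ⟨?_, ?_, ?_⟩⟩
  · simp only [Multiset.mem_map, forall_exists_index, and_imp]
    rintro _ x hx rfl
    exact ⟨by simpa [mulVec] using minPairing_le hx,
      by simpa [mulVec, latticeWidth] using le_maxPairing hx⟩
  · obtain ⟨x, hx, hmin⟩ := exists_eq_minPairing (u := N i) hS
    exact ⟨_, Multiset.mem_map_of_mem _ hx, by simp [mulVec, ← hmin]⟩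
  · obtain ⟨x, hx, hmax⟩ := exists_eq_maxPairing (u := N i) hS
    exact ⟨_, Multiset.mem_map_of_mem _ hx, by
      simp [mulVec, latticeWidth, ← hmax, sub_eq_add_neg]⟩

lemma Multiset.exists_coe_eq_pairwise_le {α β : Type*} [LinearOrder β] (f : α → β)
    (T : Multiset α) : ∃ l : List α, (l : Multiset α) = T ∧ l.Pairwise (f · ≤ f ·) := by
  refine ⟨T.toList.mergeSort (fun a b => f a ≤ f b), ?_, ?_⟩
  · rw [Multiset.coe_eq_coe.mpr (List.mergeSort_perm _ _), Multiset.coe_toList]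
  · have htrans (a b c : α) : f a ≤ f b → f b ≤ f c → f a ≤ f c := le_trans
    simpa using List.pairwise_mergeSort (le := fun a b => f a ≤ f b) (by simpa using htrans)
      (by simp [le_total]) T.toList

def normalForm (w1 a b : ℤ) (y : Fin 4 → ℤ) : Multiset (Fin 2 → ℤ) :=
  ↑[![0, y 0], ![a, y 1], ![b, y 2], ![w1, y 3]]

def heightVectors (w2 : ℤ) : Finset (Fin 4 → ℤ) :=
  (Fintype.piFinset fun _ => Icc 0 w2).filter fun y => (∃ i, y i = 0) ∧ ∃ i, y i = w2

lemma mem_heightVectors {w2 : ℤ} {y : Fin 4 → ℤ} :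
    y ∈ heightVectors w2 ↔ (∀ i, 0 ≤ y i ∧ y i ≤ w2) ∧ (∃ i, y i = 0) ∧ ∃ i, y i = w2 := by
  simp [heightVectors]

def reflectHeights (w2 : ℤ) (y : Fin 4 → ℤ) : Fin 4 → ℤ := fun i => w2 - y i

lemma reflectHeights_involutive (w2 : ℤ) : Function.Involutive (reflectHeights w2) :=
  fun y => by ext; simp [reflectHeights]

lemma reflectHeights_mem_heightVectors {w2 : ℤ} {y : Fin 4 → ℤ} (hy : y ∈ heightVectors w2) :
    reflectHeights w2 y ∈ heightVectors w2 := by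
  obtain ⟨hbox, ⟨i, hi⟩, j, hj⟩ := mem_heightVectors.mp hy
  refine mem_heightVectors.mpr ⟨fun k => ?_, ⟨j, by simp [reflectHeights, hj]⟩, i, by
    simp [reflectHeights, hi]⟩
  have := hbox k
  simp only [reflectHeights]; omega

lemma comp_rev_mem_heightVectors {w2 : ℤ} {y : Fin 4 → ℤ} (hy : y ∈ heightVectors w2) :
    y ∘ Fin.rev ∈ heightVectors w2 := by
  obtain ⟨hbox, ⟨i, hi⟩, j, hj⟩ := mem_heightVectors.mp hy
  exact mem_heightVectors.mpr ⟨fun k => hbox _, ⟨i.rev, by simpa⟩, j.rev, by simpa⟩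

def abscissaPairs (w1 : ℤ) : Finset (ℤ × ℤ) :=
  (Icc 0 w1 ×ˢ Icc 0 w1).filter fun p => p.1 ≤ p.2 ∧ p.1 + p.2 ≤ w1

def canonicalHeights (w2 : ℤ) : Finset (Fin 4 → ℤ) :=
  (heightVectors w2).filter fun y => toLex y ≤ toLex (reflectHeights w2 y)

lemma exists_eq_normalForm {w1 w2 : ℤ} {T : Multiset (Fin 2 → ℤ)} (hc : Multiset.card T = 4)
    (hT : HasBoundingBox ![w1, w2] T) : ∃ a b y, 0 ≤ a ∧ a ≤ b ∧ b ≤ w1 ∧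
      y ∈ heightVectors w2 ∧ T = normalForm w1 a b y := by
  obtain ⟨l, rfl, hl⟩ := Multiset.exists_coe_eq_pairwise_le (· 0) T
  obtain ⟨z0, z1, z2, z3, rfl⟩ : ∃ z0 z1 z2 z3, l = [z0, z1, z2, z3] := by
    match l, hc with
    | [z0, z1, z2, z3], _ => exact ⟨z0, z1, z2, z3, rfl⟩
  simp only [List.pairwise_cons, List.mem_cons, List.not_mem_nil, forall_eq_or_imp,
    List.Pairwise.nil, or_false, forall_eq, and_true] at hl
  obtain ⟨hx, ⟨p, hp, hp0⟩, q, hq, hqw⟩ := hT 0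
  obtain ⟨hy, ⟨p', hp', hp'0⟩, q', hq', hq'w⟩ := hT 1
  simp only [Multiset.mem_coe, List.mem_cons, List.not_mem_nil, or_false, forall_eq_or_imp,
    forall_eq] at hx hy hp hq hp' hq'
  simp only [cons_val_zero, cons_val_one] at hx hy hqw hq'w
  have hz0 : z0 0 = 0 := by rcases hp with rfl | rfl | rfl | rfl <;> omega
  have hz3 : z3 0 = w1 := by rcases hq with rfl | rfl | rfl | rfl <;> omega
  refine ⟨z1 0, z2 0, ![z0 1, z1 1, z2 1, z3 1], by omega, by omega, by omega,
    mem_heightVectors.mpr ⟨fun i => ?_, ?_, ?_⟩, ?_⟩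
  · fin_cases i <;> simp <;> omega
  · rcases hp' with rfl | rfl | rfl | rfl
    exacts [⟨0, hp'0⟩, ⟨1, hp'0⟩, ⟨2, hp'0⟩, ⟨3, hp'0⟩]
  · rcases hq' with rfl | rfl | rfl | rfl
    exacts [⟨0, hq'w⟩, ⟨1, hq'w⟩, ⟨2, hq'w⟩, ⟨3, hq'w⟩]
  · have hrow (z : Fin 2 → ℤ) {c : ℤ} (hc : z 0 = c) : z = ![c, z 1] := by
      ext i; fin_cases i <;> simp [hc]
    simp only [normalForm, Matrix.cons_val]
    rw [← hrow z0 hz0, ← hrow z1 rfl, ← hrow z2 rfl, ← hrow z3 hz3]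

lemma msetEquiv_normalForm_rev (w1 a b : ℤ) (y : Fin 4 → ℤ) :
    MsetEquiv (normalForm w1 a b y) (normalForm w1 (w1 - b) (w1 - a) (y ∘ Fin.rev)) := by
  refine ⟨!![-1, 0; 0, 1], by simp, ![w1, 0], ?_⟩
  rw [normalForm, normalForm, Multiset.map_coe, ← Multiset.coe_reverse]
  simp [neg_add_eq_sub, Fin.rev]

lemma msetEquiv_normalForm_reflectHeights (w1 w2 a b : ℤ) (y : Fin 4 → ℤ) :
    MsetEquiv (normalForm w1 a b y) (normalForm w1 a b (reflectHeights w2 y)) := by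
  refine ⟨!![1, 0; 0, -1], by simp, ![0, w2], ?_⟩
  simp [normalForm, reflectHeights, neg_add_eq_sub]

lemma exists_msetEquiv_abscissaPairs {w1 w2 a b : ℤ} {y : Fin 4 → ℤ} (ha : 0 ≤ a) (hab : a ≤ b)
    (hb : b ≤ w1) (hy : y ∈ heightVectors w2) : ∃ p ∈ abscissaPairs w1, ∃ y' ∈ heightVectors w2,
      MsetEquiv (normalForm w1 a b y) (normalForm w1 p.1 p.2 y') := by
  have hmem {a b : ℤ} (ha : 0 ≤ a) (hab : a ≤ b) (hb : a + b ≤ w1) : (a, b) ∈ abscissaPairs w1 := by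
    simp only [abscissaPairs, mem_filter, mem_product, mem_Icc]; omega
  rcases le_or_gt (a + b) w1 with habw | habw
  · exact ⟨(a, b), hmem ha hab habw, y, hy, .refl _⟩
  · exact ⟨(w1 - b, w1 - a), hmem (by omega) (by omega) (by omega), y ∘ Fin.rev,
      comp_rev_mem_heightVectors hy, msetEquiv_normalForm_rev w1 a b y⟩

lemma exists_msetEquiv_canonicalHeights {w1 w2 a b : ℤ} {y : Fin 4 → ℤ}
    (hy : y ∈ heightVectors w2) :
    ∃ y' ∈ canonicalHeights w2, MsetEquiv (normalForm w1 a b y) (normalForm w1 a b y') := by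
  rcases le_total (toLex y) (toLex (reflectHeights w2 y)) with hle | hle
  · exact ⟨y, mem_filter.mpr ⟨hy, hle⟩, .refl _⟩
  · refine ⟨reflectHeights w2 y, mem_filter.mpr ⟨reflectHeights_mem_heightVectors hy, ?_⟩,
      msetEquiv_normalForm_reflectHeights w1 w2 a b y⟩
    rwa [reflectHeights_involutive]

theorem exists_msetEquiv_normalForm {w1 w2 : ℤ} (h0 : 0 < w1) (h12 : w1 ≤ w2)
    {S : Multiset (Fin 2 → ℤ)} (hc : Multiset.card S = 4)
    (h : IsMultiWidth (msetHull S) ![(w1 : ℝ), (w2 : ℝ)]) :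
    ∃ p ∈ abscissaPairs w1 ×ˢ canonicalHeights w2, MsetEquiv S (normalForm w1 p.1.1 p.1.2 p.2) := by
  have hS : S ≠ 0 := by rintro rfl; simp at hc
  obtain ⟨N, hN, hN0, hN1⟩ := h.exists_isUnit_det_latticeWidth_eq hS h0 h12
  obtain ⟨T, hST, hT⟩ := exists_msetEquiv_hasBoundingBox hS hN
  have hw : (fun i => latticeWidth (N i) S) = ![w1, w2] := by
    ext i; fin_cases i <;> simp [hN0, hN1]
  rw [hw] at hT
  obtain ⟨a, b, y, ha, hab, hb, hy, rfl⟩ := exists_eq_normalForm (hST.card_eq.trans hc) hT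
  obtain ⟨p, hp, y', hy', hxy⟩ := exists_msetEquiv_abscissaPairs ha hab hb hy
  obtain ⟨y'', hy'', hyy⟩ := exists_msetEquiv_canonicalHeights (w1 := w1) (a := p.1) (b := p.2) hy'
  exact ⟨(p, y''), mem_product.mpr ⟨hp, hy''⟩, hST.trans (hxy.trans hyy)⟩

lemma card_abscissaPairs_add_two {w : ℤ} (hw : 0 ≤ w) :
    (#(abscissaPairs (w + 2)) : ℤ) = #(abscissaPairs w) + (w + 3) := by
  have hzero : #((abscissaPairs (w + 2)).filter (·.1 = 0)) = #(Icc 0 (w + 2)) := by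
    refine card_nbij' Prod.snd (fun b => (0, b)) ?_ ?_ ?_ ?_ <;>
      simp +contextual [abscissaPairs, Set.MapsTo, Set.LeftInvOn]
    all_goals omega
  have hpos : #((abscissaPairs (w + 2)).filter (¬ ·.1 = 0)) = #(abscissaPairs w) := by
    refine card_nbij' (· - (1, 1)) (· + (1, 1)) ?_ ?_ ?_ ?_ <;>
      simp +contextual [abscissaPairs, Set.MapsTo, Set.LeftInvOn]
    all_goals omega
  rw [← card_filter_add_card_filter_not (·.1 = 0), hzero, hpos, Int.card_Icc]
  omega

lemma card_abscissaPairs {w : ℤ} (hw : 0 ≤ w) :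
    (#(abscissaPairs w) : ℚ) = (w : ℚ) ^ 2 / 4 + w + if Even w then 1 else 3 / 4 := by
  lift w to ℕ using hw
  induction w using Nat.twoStepInduction with
  | zero => rw [show #(abscissaPairs ((0 : ℕ) : ℤ)) = 1 by rfl]; norm_num
  | one => rw [show #(abscissaPairs ((1 : ℕ) : ℤ)) = 2 by rfl]; norm_num
  | more n ih _ =>
    have hrec : (#(abscissaPairs (n + 2)) : ℚ) = #(abscissaPairs n) + (n + 3) := by
      exact_mod_cast card_abscissaPairs_add_two (w := n) (by positivity)
    push_cast at ih ⊢
    rw [hrec, ih]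
    simp only [Int.even_add, Int.even_coe_nat, even_two, iff_true]
    split_ifs <;> ring

lemma card_filter_forall_piFinset {α : Type*} [DecidableEq α] {n : ℕ} (s : Finset α)
    (p : α → Prop) [DecidablePred p] :
    #((Fintype.piFinset fun _ : Fin n => s).filter fun y => ∀ i, p (y i)) = #(s.filter p) ^ n := by
  rw [← Fintype.card_piFinset_const]
  congr 1
  ext y
  simp [forall_and]

lemma card_heightVectors {w : ℤ} (hw : 0 < w) : (#(heightVectors w) : ℤ) = 12 * w ^ 2 + 2 := by
  set box := Fintype.piFinset fun _ : Fin 4 => Icc 0 w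
  have hcard (p : ℤ → Prop) [DecidablePred p] {a b : ℤ} (hab : a ≤ b + 1)
      (hp : (Icc 0 w).filter p = Icc a b) :
      (#(box.filter fun y => ∀ i, p (y i)) : ℤ) = (b + 1 - a) ^ 4 := by
    rw [card_filter_forall_piFinset, hp, Nat.cast_pow, Int.card_Icc_of_le _ _ hab]
  have hne0 := hcard (· ≠ 0) (a := 1) (b := w) (by omega)
    (by ext; simp only [ne_eq, mem_filter, mem_Icc]; omega)
  have hnew := hcard (· ≠ w) (a := 0) (b := w - 1) (by omega)
    (by ext; simp only [ne_eq, mem_filter, mem_Icc]; omega)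
  have hne0w := hcard (fun a => a ≠ 0 ∧ a ≠ w) (a := 1) (b := w - 1) (by omega)
    (by ext; simp only [ne_eq, mem_filter, mem_Icc]; omega)
  have hbox : (#box : ℤ) = (w + 1) ^ 4 := by
    rw [Fintype.card_piFinset_const, Nat.cast_pow, Int.card_Icc_of_le _ _ (by omega), sub_zero]
  have hcompl : box.filter (fun y => ¬ ((∃ i, y i = 0) ∧ ∃ i, y i = w)) =
      box.filter (fun y => ∀ i, y i ≠ 0) ∪ box.filter (fun y => ∀ i, y i ≠ w) := by
    rw [← filter_or]; congr! 1 with y; simp only [not_and_or, not_exists, ne_eq]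
  have hinter : box.filter (fun y => ∀ i, y i ≠ 0) ∩ box.filter (fun y => ∀ i, y i ≠ w) =
      box.filter (fun y => ∀ i, y i ≠ 0 ∧ y i ≠ w) := by
    rw [← filter_and]; simp [forall_and]
  have h1 := card_filter_add_card_filter_not (s := box) fun y => (∃ i, y i = 0) ∧ ∃ i, y i = w
  have h2 := card_union_add_card_inter (box.filter fun y => ∀ i, y i ≠ 0)
    (box.filter fun y => ∀ i, y i ≠ w)
  rw [hcompl] at h1
  rw [hinter] at h2
  zify at h1 h2
  rw [heightVectors]
  linear_combination h1 - h2 + hbox - hne0 - hnew + hne0w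

lemma two_mul_card_filter_le {α : Type*} [DecidableEq α] {s : Finset α} {σ : α → α}
    (hσ : Function.Involutive σ) (hs : ∀ x ∈ s, σ x ∈ s) (p : α → Prop) [DecidablePred p]
    (hp : ∀ x ∈ s, p x → ¬ p (σ x)) : 2 * #(s.filter p) ≤ #s := by
  have hdisj : Disjoint (s.filter p) ((s.filter p).image σ) := by
    simp only [disjoint_left, mem_filter, mem_image, not_exists, not_and]
    rintro _ ⟨hx, hpx⟩ x ⟨hxs, hx'⟩ rfl
    exact hp x hxs hx' hpx
  calc 2 * #(s.filter p) = #(s.filter p ∪ (s.filter p).image σ) := by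
        rw [card_union_of_disjoint hdisj, card_image_of_injective _ hσ.injective, two_mul]
    _ ≤ #s := card_le_card (union_subset (filter_subset _ _)
        (image_subset_iff.mpr fun x hx => hs x (mem_filter.mp hx).1))

lemma card_canonicalHeights_le {w : ℤ} (hw : 0 < w) :
    (#(canonicalHeights w) : ℚ) ≤ 6 * w ^ 2 + 1 := by
  have h := two_mul_card_filter_le (reflectHeights_involutive w)
    (fun _ => reflectHeights_mem_heightVectors) (fun y => toLex y ≤ toLex (reflectHeights w y))
    fun y hy hle hge => by
      rw [reflectHeights_involutive] at hge
      obtain ⟨-, ⟨i, hi⟩, -⟩ := mem_heightVectors.mp hy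
      have := congrFun (toLex_inj.mp (le_antisymm hle hge)) i
      simp only [hi, reflectHeights, sub_zero] at this
      omega
  have hcard : ((#(heightVectors w) : ℤ) : ℚ) = 12 * w ^ 2 + 2 := by
    exact_mod_cast card_heightVectors hw
  have : (2 * #(canonicalHeights w) : ℚ) ≤ #(heightVectors w) := by exact_mod_cast h
  push_cast at hcard
  linarith

lemma Quot.finite_and_natCard_le {α β : Type*} {r : α → α → Prop} (s : Finset β)
    (P : α → β → Prop) (hP : ∀ x, ∃ b ∈ s, P x b) (hr : ∀ x y b, P x b → P y b → r x y) :
    Finite (Quot r) ∧ Nat.card (Quot r) ≤ #s := by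
  choose f hfs hf using hP
  let g : Quot r → s := fun q => ⟨f q.out, hfs _⟩
  have hg : Function.Injective g := fun q q' hqq' => by
    have hff : f q.out = f q'.out := congrArg Subtype.val hqq'
    rw [← Quot.out_eq q, ← Quot.out_eq q']
    exact Quot.sound (hr _ _ _ (hf _) (hff ▸ hf _))
  exact ⟨Finite.of_injective g hg,
    (Nat.card_le_card_of_injective g hg).trans_eq (Nat.card_eq_finsetCard s)⟩

/-- For `0 < w₁ ≤ w₂`, the number of affine equivalence classes of four-point multisets
in `ℤ²` with multi-width `(w₁, w₂)` is finite and at most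
`(w₁²/4 + w₁ + c)(6w₂² + 1)` where `c = 1` for `w₁` even and `c = 3/4` for `w₁` odd. -/
theorem four_point_sets_bound (w1 w2 : ℤ) (h0 : 0 < w1) (h12 : w1 ≤ w2) :
    Finite (Quot fun S T : {S : Multiset (Fin 2 → ℤ) //
        Multiset.card S = 4 ∧ IsMultiWidth (msetHull S) ![(w1 : ℝ), (w2 : ℝ)]} =>
          MsetEquiv S.1 T.1) ∧
    (Nat.card (Quot fun S T : {S : Multiset (Fin 2 → ℤ) //
        Multiset.card S = 4 ∧ IsMultiWidth (msetHull S) ![(w1 : ℝ), (w2 : ℝ)]} =>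
          MsetEquiv S.1 T.1) : ℚ) ≤
      ((w1 : ℚ) ^ 2 / 4 + (w1 : ℚ) + (if Even w1 then 1 else 3 / 4)) *
        (6 * (w2 : ℚ) ^ 2 + 1) := by
  refine (Quot.finite_and_natCard_le (abscissaPairs w1 ×ˢ canonicalHeights w2)
    (fun S p => MsetEquiv S.1 (normalForm w1 p.1.1 p.1.2 p.2))
    (fun S => exists_msetEquiv_normalForm h0 h12 S.2.1 S.2.2)
    fun _ _ _ hS hT => hS.trans hT.symm).imp id fun hcard => ?_
  calc (Nat.card _ : ℚ) ≤ #(abscissaPairs w1 ×ˢ canonicalHeights w2) := by exact_mod_cast hcard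
    _ = #(abscissaPairs w1) * #(canonicalHeights w2) := by rw [card_product]; push_cast; rfl
    _ ≤ _ := by
      rw [card_abscissaPairs h0.le]
      gcongr
      exact card_canonicalHeights_le (h0.trans_le h12)
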